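/- Let u ∈ X, let U be an open neighborhood of u in X, and let ⟨α⟩ ∈ p⁻¹(u). Then ⟨α,U⟩ ∩ p⁻¹(u) = {⟨α⟩} if and only if π(α,U) ⊆ H. -/

import Mathlib

/-! Over `α(1)` the basic set `⟨α,U⟩` consists of the classes `⟨α·γ⟩` of loops `γ` at `α(1)`
in `U`, and `⟨α·γ⟩ = ⟨α⟩` holds exactly when `[α·γ·α⁻] ∈ H`, since `(α·γ)·α⁻ ≃ α·(γ·α⁻)`.
Hence the fibre of `⟨α,U⟩` over `α(1)` is `{⟨α⟩}` iff every element of `π(α,U)` lies in `H`. -/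

open unitInterval

noncomputable section

/-- The homotopy class of a loop, as an element of the fundamental group. -/
def pathClass {X : Type*} [TopologicalSpace X] {x : X} (γ : Path x x) :
    FundamentalGroup X x :=
  FundamentalGroup.fromPath (X := TopCat.of X) (Quotient.mk (Path.Homotopic.setoid x x) γ)

/-- A continuous path in `X` starting at the basepoint `x`. -/
structure RawPath (X : Type*) [TopologicalSpace X] (x : X) where
  toFun : C(unitInterval, X)
  source : toFun 0 = x

variable {X : Type*} [TopologicalSpace X] {x : X}

/-- The endpoint `α(1)` of a path starting at the basepoint. -/
def RawPath.endpt (α : RawPath X x) : X := α.toFun 1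

/-- A raw path, as a bundled `Path` from `x` to its endpoint. -/
def RawPath.path (α : RawPath X x) : Path x α.endpt := ⟨α.toFun, α.source, rfl⟩

/-- The relation `α ∼ β` iff `α(1) = β(1)` and `[α · β⁻] ∈ H`. -/
def SpanierRel (H : Subgroup (FundamentalGroup X x)) (α β : RawPath X x) : Prop :=
  ∃ hend : α.endpt = β.endpt,
    pathClass (α.path.trans (β.path.symm.cast hend rfl)) ∈ H

/-- The space `X̃`: paths starting at `x`, modulo `α ∼ β` iff `α(1) = β(1)`
and `[α · β⁻] ∈ H`. -/
def SpanierSpace (H : Subgroup (FundamentalGroup X x)) : Type _ :=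
  Quot (SpanierRel H)

/-- The equivalence class `⟨α⟩ ∈ X̃` of a path `α` starting at `x`. -/
def SpanierSpace.mk (H : Subgroup (FundamentalGroup X x)) (α : RawPath X x) :
    SpanierSpace H :=
  Quot.mk _ α

/-- The endpoint projection `p : X̃ → X`, `p ⟨α⟩ = α(1)`. -/
def spanierProj (H : Subgroup (FundamentalGroup X x)) : SpanierSpace H → X :=
  Quot.lift RawPath.endpt (fun _ _ hab => by obtain ⟨h, -⟩ := hab; exact h)

/-- The concatenation `α · γ` of a path `α` starting at `x` with a path `γ`
starting at `α(1)`. -/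
def RawPath.extend (α : RawPath X x) {y : X} (γ : Path α.endpt y) : RawPath X x :=
  ⟨(α.path.trans γ).toContinuousMap, (α.path.trans γ).source'⟩

/-- The basic set `⟨α,U⟩ = {⟨α·γ⟩ : γ a continuous path in U with γ(0) = α(1)}`. -/
def basicSet (H : Subgroup (FundamentalGroup X x)) (α : RawPath X x) (U : Set X) :
    Set (SpanierSpace H) :=
  {z | ∃ (y : X) (γ : Path α.endpt y), Set.range γ ⊆ U ∧ z = SpanierSpace.mk H (α.extend γ)}

/-- The topology on `X̃` generated by the basic sets `⟨α,U⟩` with `U` open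
and `α(1) ∈ U`. -/
instance spanierTopology (H : Subgroup (FundamentalGroup X x)) :
    TopologicalSpace (SpanierSpace H) :=
  TopologicalSpace.generateFrom
    {S | ∃ (α : RawPath X x) (U : Set X), IsOpen U ∧ α.endpt ∈ U ∧ S = basicSet H α U}

/-- The subgroup-like subset `π(α,U) = [α]·i_#(π₁(U,α(1)))·[α]⁻¹` of `π₁(X,x)`:
all classes `[α·γ·α⁻]` with `γ` a loop at `α(1)` inside `U`. -/
def piSet (α : RawPath X x) (U : Set X) : Set (FundamentalGroup X x) :=
  {g | ∃ γ : Path α.endpt α.endpt, Set.range γ ⊆ U ∧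
    g = pathClass (α.path.trans (γ.trans α.path.symm))}

end

section

variable {X : Type*} [TopologicalSpace X] {x : X}

open Path.Homotopic.Quotient in
theorem pathClass_trans_symm_mul {a : X} (p q r : Path x a) :
    pathClass (q.trans r.symm) * pathClass (p.trans q.symm) = pathClass (p.trans r.symm) := by
  change trans (mk (p.trans q.symm)) (mk (q.trans r.symm)) = mk (p.trans r.symm)
  simp only [mk_trans, mk_symm]
  grind

theorem pathClass_trans_symm_self {a : X} (p : Path x a) : pathClass (p.trans p.symm) = 1 :=
  Quotient.sound (Path.Homotopic.trans_symm p)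

theorem pathClass_trans_cast_symm_mul {a b c : X} (p : Path x a) (q : Path x b) (r : Path x c)
    (hab : a = b) (hbc : b = c) :
    pathClass (q.trans (r.symm.cast hbc rfl)) * pathClass (p.trans (q.symm.cast hab rfl)) =
      pathClass (p.trans (r.symm.cast (hab.trans hbc) rfl)) := by
  subst hab hbc
  exact pathClass_trans_symm_mul p q r

theorem spanierRel_equivalence (H : Subgroup (FundamentalGroup X x)) :
    Equivalence (SpanierRel H) where
  refl α := ⟨rfl, (pathClass_trans_symm_self α.path).symm ▸ H.one_mem⟩
  symm := by
    rintro α β ⟨hαβ, h⟩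
    have hinv : pathClass (β.path.trans (α.path.symm.cast hαβ.symm rfl)) =
        (pathClass (α.path.trans (β.path.symm.cast hαβ rfl)))⁻¹ :=
      eq_inv_of_mul_eq_one_left <|
        (pathClass_trans_cast_symm_mul _ _ _ _ _).trans (pathClass_trans_symm_self α.path)
    exact ⟨hαβ.symm, hinv ▸ H.inv_mem h⟩
  trans := by
    rintro α β γ ⟨hαβ, hα⟩ ⟨hβγ, hβ⟩
    have hmul := pathClass_trans_cast_symm_mul α.path β.path γ.path hαβ hβγ
    exact ⟨hαβ.trans hβγ, hmul ▸ H.mul_mem hβ hα⟩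

theorem SpanierSpace.mk_eq_mk_iff (H : Subgroup (FundamentalGroup X x)) (α β : RawPath X x) :
    SpanierSpace.mk H α = SpanierSpace.mk H β ↔ SpanierRel H α β :=
  (spanierRel_equivalence H).quot_mk_eq_iff α β

theorem RawPath.endpt_extend (α : RawPath X x) {y : X} (γ : Path α.endpt y) :
    (α.extend γ).endpt = y :=
  (α.path.trans γ).target

theorem SpanierSpace.mk_extend_eq_mk_iff (H : Subgroup (FundamentalGroup X x))
    (α : RawPath X x) (γ : Path α.endpt α.endpt) :
    SpanierSpace.mk H (α.extend γ) = SpanierSpace.mk H α ↔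
      pathClass (α.path.trans (γ.trans α.path.symm)) ∈ H := by
  have hassoc : pathClass ((α.path.trans γ).trans α.path.symm) =
      pathClass (α.path.trans (γ.trans α.path.symm)) :=
    Quotient.sound (Path.Homotopic.trans_assoc _ _ _)
  rw [SpanierSpace.mk_eq_mk_iff]
  exact ⟨fun ⟨_, h⟩ => hassoc ▸ h, fun h => ⟨α.endpt_extend γ, hassoc ▸ h⟩⟩

theorem mem_basicSet_inter_fiber_iff (H : Subgroup (FundamentalGroup X x)) (α : RawPath X x)
    (U : Set X) (z : SpanierSpace H) :
    z ∈ basicSet H α U ∩ spanierProj H ⁻¹' {α.endpt} ↔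
      ∃ γ : Path α.endpt α.endpt, Set.range γ ⊆ U ∧ z = SpanierSpace.mk H (α.extend γ) := by
  constructor
  · rintro ⟨⟨y, γ, hγU, rfl⟩, hy⟩
    obtain rfl : y = α.endpt := (α.endpt_extend γ).symm.trans hy
    exact ⟨γ, hγU, rfl⟩
  · rintro ⟨γ, hγU, rfl⟩
    exact ⟨⟨_, γ, hγU, rfl⟩, α.endpt_extend γ⟩

end

theorem basicSet_inter_fiber_eq_singleton_iff_general
    {X : Type*} [TopologicalSpace X] {x : X} (H : Subgroup (FundamentalGroup X x))
    {u : X} {U : Set X} (hu : u ∈ U)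
    (α : RawPath X x) (hα : α.endpt = u) :
    basicSet H α U ∩ spanierProj H ⁻¹' {u} = {SpanierSpace.mk H α} ↔
      piSet α U ⊆ (H : Set (FundamentalGroup X x)) := by
  subst hα
  have hrefl : Set.range (Path.refl α.endpt) ⊆ U := by
    rwa [Path.refl_range, Set.singleton_subset_iff]
  simp only [Set.eq_singleton_iff_unique_mem, mem_basicSet_inter_fiber_iff]
  constructor
  · rintro ⟨-, hunique⟩ _ ⟨γ, hγU, rfl⟩
    exact (SpanierSpace.mk_extend_eq_mk_iff H α γ).1 (hunique _ ⟨γ, hγU, rfl⟩)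
  · intro hH
    have hloop (γ : Path α.endpt α.endpt) (hγU : Set.range γ ⊆ U) :
        SpanierSpace.mk H (α.extend γ) = SpanierSpace.mk H α :=
      (SpanierSpace.mk_extend_eq_mk_iff H α γ).2 (hH ⟨γ, hγU, rfl⟩)
    refine ⟨⟨_, hrefl, (hloop _ hrefl).symm⟩, ?_⟩
    rintro _ ⟨γ, hγU, rfl⟩
    exact hloop γ hγU

/-- For an open neighborhood `U` of `u` and `⟨α⟩ ∈ p⁻¹(u)`, one has
`⟨α,U⟩ ∩ p⁻¹(u) = {⟨α⟩}` if and only if `π(α,U) ⊆ H`. -/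
theorem basicSet_inter_fiber_eq_singleton_iff
    {X : Type*} [TopologicalSpace X] {x : X} (H : Subgroup (FundamentalGroup X x))
    {u : X} {U : Set X} (hUopen : IsOpen U) (hu : u ∈ U)
    (α : RawPath X x) (hα : α.endpt = u) :
    basicSet H α U ∩ spanierProj H ⁻¹' {u} = {SpanierSpace.mk H α} ↔
      piSet α U ⊆ (H : Set (FundamentalGroup X x)) :=
  basicSet_inter_fiber_eq_singleton_iff_general H hu α hα
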